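/- Consider the coframe on the 7-dimensional Lie group B^{x^8} given by Equation (8int): φ_0 = a^{-1}da, φ_{-2} = a^4 db, ω^4 = a^8 dξ^4, ω^2 = a^{12}(dξ^2 - 2b dξ^4), ω^0 = a^{16}(dξ^0 - 4b dξ^2 + 4b² dξ^4), ω^{-2} = a^{20}(dξ^{-2} - 6b dξ^0 + 12b² dξ^2 - 8b³ dξ^4 - 322560 ξ^4 dξ^2), and ω^{-4} as given. These 1-forms satisfy the reduced structure equations: dω^{-4} = 24 φ_0∧ω^{-4} - 8 φ_{-2}∧ω^{-2} + 645120 ω^0∧ω^4, dω^{-2} = 20 φ_0∧ω^{-2} - 6 φ_{-2}∧ω^0 + 322560 ω^2∧ω^4, dω^0 = 16 φ_0∧ω^0 - 4 φ_{-2}∧ω^2, dω^2 = 12 φ_0∧ω^2 - 2 φ_{-2}∧ω^4, dω^4 = 8 φ_0∧ω^4, dφ_0 = 0, dφ_{-2} = 4 φ_0∧φ_{-2}. -/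

import Mathlib

noncomputable section

/-- The 7-dimensional space with coordinates (ξ⁻⁴, ξ⁻², ξ⁰, ξ², ξ⁴, a, b),
indexed 0,…,6. -/
abbrev E7 := Fin 7 → ℝ

/-- The coordinate differential dx_i. -/
def dx (i : Fin 7) : E7 →L[ℝ] ℝ := ContinuousLinearMap.proj i

/-- φ₀ = a⁻¹ da. -/
def φ0 : E7 → E7 →L[ℝ] ℝ := fun x => (x 5)⁻¹ • dx 5

/-- φ₋₂ = a⁴ db. -/
def φm : E7 → E7 →L[ℝ] ℝ := fun x => (x 5) ^ 4 • dx 6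

/-- ω⁴ = a⁸ dξ⁴. -/
def ω4 : E7 → E7 →L[ℝ] ℝ := fun x => (x 5) ^ 8 • dx 4

/-- ω² = a¹²(dξ² - 2b dξ⁴). -/
def ω2 : E7 → E7 →L[ℝ] ℝ := fun x => (x 5) ^ 12 • (dx 3 - (2 * x 6) • dx 4)

/-- ω⁰ = a¹⁶(dξ⁰ - 4b dξ² + 4b² dξ⁴). -/
def ω0 : E7 → E7 →L[ℝ] ℝ := fun x =>
  (x 5) ^ 16 • (dx 2 - (4 * x 6) • dx 3 + (4 * (x 6) ^ 2) • dx 4)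

/-- ω⁻² = a²⁰(dξ⁻² - 6b dξ⁰ + 12b² dξ² - 8b³ dξ⁴ - 322560 ξ⁴ dξ²). -/
def ωm2 : E7 → E7 →L[ℝ] ℝ := fun x =>
  (x 5) ^ 20 • (dx 1 - (6 * x 6) • dx 2 + (12 * (x 6) ^ 2) • dx 3
    - (8 * (x 6) ^ 3) • dx 4 - (322560 * x 4) • dx 3)

/-- ω⁻⁴ = a²⁴(dξ⁻⁴ - 8b dξ⁻² + 24b² dξ⁰ - 32b³ dξ² + 16b⁴ dξ⁴
           + 8·322560·ξ⁴b dξ² - 2·322560·ξ⁴ dξ⁰). -/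
def ωm4 : E7 → E7 →L[ℝ] ℝ := fun x =>
  (x 5) ^ 24 • (dx 0 - (8 * x 6) • dx 1 + (24 * (x 6) ^ 2) • dx 2
    - (32 * (x 6) ^ 3) • dx 3 + (16 * (x 6) ^ 4) • dx 4
    + (8 * 322560 * x 4 * x 6) • dx 3 - (2 * 322560 * x 4) • dx 2)

/-- Exterior derivative of a 1-form on E7 (constant vector fields). -/
def d1 (α : E7 → E7 →L[ℝ] ℝ) : E7 → E7 → E7 → ℝ := fun x u v =>
  fderiv ℝ α x u v - fderiv ℝ α x v u

/-- Wedge product of two scalar 1-forms. -/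
def wdg (α β : E7 → E7 →L[ℝ] ℝ) : E7 → E7 → E7 → ℝ := fun x u v =>
  α x u * β x v - α x v * β x u

/-!
Every form of the coframe is `a ^ w • θ` where `θ` involves only `b` and `ξ⁴`, so the Leibniz rule
`d(a ^ w θ) = w φ₀ ∧ (a ^ w θ) + a ^ w dθ` makes the weight `w` the `φ₀`-coefficient. The `dθ` are
computed directly: each is a multiple of `db ∧ θ'`, with `θ'` the next form of the chain, plus a
multiple of `θ² ∧ θ⁴` resp. `θ⁰ ∧ θ⁴` for `θ⁻²` and `θ⁻⁴`. Since `φ₋₂ = a⁴ db` and the weights add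
up, multiplying by `a ^ w` turns these into the `φ₋₂`- and `ω ∧ ω⁴`-terms of the structure equations.
-/

def db : E7 → E7 →L[ℝ] ℝ := fun _ => dx 6

def θ4 : E7 → E7 →L[ℝ] ℝ := fun _ => dx 4

def θ2 : E7 → E7 →L[ℝ] ℝ := fun x => dx 3 - (2 * x 6) • dx 4

def θ0 : E7 → E7 →L[ℝ] ℝ := fun x =>
  dx 2 - (4 * x 6) • dx 3 + (4 * (x 6) ^ 2) • dx 4

def θm2 : E7 → E7 →L[ℝ] ℝ := fun x =>
  dx 1 - (6 * x 6) • dx 2 + (12 * (x 6) ^ 2) • dx 3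
    - (8 * (x 6) ^ 3) • dx 4 - (322560 * x 4) • dx 3

def θm4 : E7 → E7 →L[ℝ] ℝ := fun x =>
  dx 0 - (8 * x 6) • dx 1 + (24 * (x 6) ^ 2) • dx 2
    - (32 * (x 6) ^ 3) • dx 3 + (16 * (x 6) ^ 4) • dx 4
    + (8 * 322560 * x 4 * x 6) • dx 3 - (2 * 322560 * x 4) • dx 2

theorem φm_eq : φm = fun y => y 5 ^ 4 • db y := rfl

theorem ω4_eq : ω4 = fun y => y 5 ^ 8 • θ4 y := rfl

theorem ω2_eq : ω2 = fun y => y 5 ^ 12 • θ2 y := rfl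

theorem ω0_eq : ω0 = fun y => y 5 ^ 16 • θ0 y := rfl

theorem ωm2_eq : ωm2 = fun y => y 5 ^ 20 • θm2 y := rfl

theorem ωm4_eq : ωm4 = fun y => y 5 ^ 24 • θm4 y := rfl

theorem differentiable_db : Differentiable ℝ db := differentiable_const _

theorem differentiable_θ4 : Differentiable ℝ θ4 := differentiable_const _

theorem differentiable_θ2 : Differentiable ℝ θ2 := by unfold θ2; fun_prop

theorem differentiable_θ0 : Differentiable ℝ θ0 := by unfold θ0; fun_prop

theorem differentiable_θm2 : Differentiable ℝ θm2 := by unfold θm2; fun_prop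

theorem differentiable_θm4 : Differentiable ℝ θm4 := by unfold θm4; fun_prop

section Calculus

variable {x : E7} {α β : E7 → E7 →L[ℝ] ℝ}

theorem fderiv_coord (i : Fin 7) : fderiv ℝ (fun y : E7 => y i) x = dx i :=
  (dx i).fderiv

theorem fderiv_comp_coord {g : ℝ → ℝ} {g' : ℝ} {i : Fin 7} (hg : HasDerivAt g g' (x i)) :
    fderiv ℝ (fun y : E7 => g (y i)) x = g' • dx i :=
  (hg.comp_hasFDerivAt x (dx i).hasFDerivAt).fderiv

theorem d1_eq_of_hasFDerivAt {α' : E7 →L[ℝ] E7 →L[ℝ] ℝ} (h : HasFDerivAt α α' x) (u v : E7) :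
    d1 α x u v = α' u v - α' v u := by
  rw [d1, h.fderiv]

theorem d1_const (L : E7 →L[ℝ] ℝ) (u v : E7) : d1 (fun _ => L) x u v = 0 := by
  simp only [d1, fderiv_fun_const, Pi.zero_apply, zero_apply, sub_self]

theorem d1_add (hα : DifferentiableAt ℝ α x) (hβ : DifferentiableAt ℝ β x) (u v : E7) :
    d1 (fun y => α y + β y) x u v = d1 α x u v + d1 β x u v := by
  rw [d1_eq_of_hasFDerivAt (hα.hasFDerivAt.fun_add hβ.hasFDerivAt), d1, d1]
  simp only [add_apply]
  ring

theorem d1_sub (hα : DifferentiableAt ℝ α x) (hβ : DifferentiableAt ℝ β x) (u v : E7) :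
    d1 (fun y => α y - β y) x u v = d1 α x u v - d1 β x u v := by
  rw [d1_eq_of_hasFDerivAt (hα.hasFDerivAt.fun_sub hβ.hasFDerivAt), d1, d1]
  simp only [sub_apply]
  ring

theorem d1_smul {f : E7 → ℝ} (hf : DifferentiableAt ℝ f x) (hα : DifferentiableAt ℝ α x)
    (u v : E7) :
    d1 (fun y => f y • α y) x u v = wdg (fderiv ℝ f) α x u v + f x * d1 α x u v := by
  rw [d1_eq_of_hasFDerivAt (hf.hasFDerivAt.fun_smul hα.hasFDerivAt), d1, wdg]
  simp only [add_apply, smul_apply, ContinuousLinearMap.smulRight_apply, smul_eq_mul]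
  ring

theorem wdg_smul_smul (f g : E7 → ℝ) (u v : E7) :
    wdg (fun y => f y • α y) (fun y => g y • β y) x u v = f x * g x * wdg α β x u v := by
  simp only [wdg, smul_apply, smul_eq_mul]
  ring

theorem d1_comp_coord_smul_dx {g : ℝ → ℝ} {g' : ℝ} {i : Fin 7} (hg : HasDerivAt g g' (x i))
    (u v : E7) : d1 (fun y => g (y i) • dx i) x u v = 0 := by
  rw [d1_smul (f := fun y => g (y i)) (hg.differentiableAt.comp x (dx i).differentiableAt)
    (differentiableAt_const _), d1_const, wdg, fderiv_comp_coord hg]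
  simp only [smul_apply, smul_eq_mul]
  ring

theorem d1_coord_pow_smul (w : ℕ) (hx : x 5 ≠ 0) (hα : DifferentiableAt ℝ α x) (u v : E7) :
    d1 (fun y => y 5 ^ w • α y) x u v =
      w * wdg φ0 (fun y => y 5 ^ w • α y) x u v + x 5 ^ w * d1 α x u v := by
  rw [d1_smul (by fun_prop) hα]
  unfold φ0
  rw [wdg_smul_smul, wdg, wdg, fderiv_comp_coord (hasDerivAt_pow w (x 5))]
  simp only [smul_apply, smul_eq_mul]
  rcases w with _ | w
  · simp
  · rw [Nat.add_sub_cancel]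
    field_simp
    ring

end Calculus

section ReducedForms

variable (x : E7) (u v : E7)

theorem d1_db : d1 db x u v = 0 := d1_const _ u v

theorem d1_θ4 : d1 θ4 x u v = 0 := d1_const _ u v

theorem d1_θ2 : d1 θ2 x u v = -2 * wdg db θ4 x u v := by
  unfold θ2
  simp (disch := fun_prop) only [d1_sub, d1_smul, d1_const, wdg]
  simp (disch := fun_prop) only [fderiv_const_mul, fderiv_coord, db, θ4, dx, smul_apply,
    ContinuousLinearMap.proj_apply, smul_eq_mul]
  ring

theorem d1_θ0 : d1 θ0 x u v = -4 * wdg db θ2 x u v := by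
  unfold θ0
  simp (disch := fun_prop) only [d1_add, d1_sub, d1_smul, d1_const, wdg]
  simp (disch := fun_prop) only [fderiv_const_mul, fderiv_coord, fderiv_fun_pow, db, θ2, dx,
    sub_apply, smul_apply, ContinuousLinearMap.proj_apply, smul_eq_mul, nsmul_eq_mul]
  ring

theorem d1_θm2 :
    d1 θm2 x u v = -6 * wdg db θ0 x u v + 322560 * wdg θ2 θ4 x u v := by
  unfold θm2
  simp (disch := fun_prop) only [d1_add, d1_sub, d1_smul, d1_const, wdg]
  simp (disch := fun_prop) only [fderiv_const_mul, fderiv_coord, fderiv_fun_pow, db, θ0, θ2,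
    θ4, dx, add_apply, sub_apply, smul_apply, ContinuousLinearMap.proj_apply, smul_eq_mul,
    nsmul_eq_mul]
  ring

set_option maxHeartbeats 1000000 in
theorem d1_θm4 :
    d1 θm4 x u v = -8 * wdg db θm2 x u v + 645120 * wdg θ0 θ4 x u v := by
  unfold θm4
  simp (disch := fun_prop) only [d1_add, d1_sub, d1_smul, d1_const, wdg]
  simp (disch := fun_prop) only [fderiv_const_mul, fderiv_fun_mul, fderiv_coord, fderiv_fun_pow,
    db, θm2, θ0, θ4, dx, add_apply, sub_apply, smul_apply, ContinuousLinearMap.proj_apply,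
    smul_eq_mul, nsmul_eq_mul]
  ring

end ReducedForms

/-- the coframe of Equation (8int) on the Lie group B^{x⁸}
satisfies the reduced structure equations (eqn:x8-red):
dω⁻⁴ = 24φ₀∧ω⁻⁴ - 8φ₋₂∧ω⁻² + 2·322560 ω⁰∧ω⁴,
dω⁻² = 20φ₀∧ω⁻² - 6φ₋₂∧ω⁰ + 322560 ω²∧ω⁴,
dω⁰ = 16φ₀∧ω⁰ - 4φ₋₂∧ω², dω² = 12φ₀∧ω² - 2φ₋₂∧ω⁴, dω⁴ = 8φ₀∧ω⁴,
dφ₀ = 0, dφ₋₂ = 4φ₀∧φ₋₂. -/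
theorem x8_reduced_structure_equations :
    ∀ x : E7, 0 < x 5 → ∀ u v : E7,
      d1 ωm4 x u v = 24 * wdg φ0 ωm4 x u v - 8 * wdg φm ωm2 x u v
          + 645120 * wdg ω0 ω4 x u v ∧
      d1 ωm2 x u v = 20 * wdg φ0 ωm2 x u v - 6 * wdg φm ω0 x u v
          + 322560 * wdg ω2 ω4 x u v ∧
      d1 ω0 x u v = 16 * wdg φ0 ω0 x u v - 4 * wdg φm ω2 x u v ∧
      d1 ω2 x u v = 12 * wdg φ0 ω2 x u v - 2 * wdg φm ω4 x u v ∧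
      d1 ω4 x u v = 8 * wdg φ0 ω4 x u v ∧
      d1 φ0 x u v = 0 ∧
      d1 φm x u v = 4 * wdg φ0 φm x u v := by
  intro x hx u v
  have ha : x 5 ≠ 0 := hx.ne'
  refine ⟨?_, ?_, ?_, ?_, ?_, d1_comp_coord_smul_dx (hasDerivAt_inv ha) u v, ?_⟩ <;>
  simp only [φm_eq, ω4_eq, ω2_eq, ω0_eq, ωm2_eq, ωm4_eq,
    d1_coord_pow_smul _ ha, Differentiable.differentiableAt, differentiable_db, differentiable_θ4,
    differentiable_θ2, differentiable_θ0, differentiable_θm2, differentiable_θm4,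
    d1_db, d1_θ4, d1_θ2, d1_θ0, d1_θm2, d1_θm4, wdg_smul_smul] <;>
  ring
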